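/- For every grid Γ, the random-walk kernel σ on Γ is Blackwell order preserving (when restricted to probability measures supported on Γ): if μ, ν are probability measures supported on Γ with equal barycenters and μ ⪯_B ν, then σ∘μ ⪯_B σ∘ν. -/

import Mathlib

open MeasureTheory Set
open scoped ENNReal unitInterval Classical

noncomputable section

namespace Persuasion

/-- Total mass of a measure on the unit interval. -/
def tmass (μ : Measure I) : ℝ := (μ univ).toReal

/-- Integral of the identity. -/
def intg (μ : Measure I) : ℝ := ∫ x, (x : ℝ) ∂μ

/-- Barycenter. -/
def bary (μ : Measure I) : ℝ := intg μ / tmass μ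

/-- Blackwell order: `BLE μ ν` means `μ ⪯_B ν`. -/
def BLE (μ ν : Measure I) : Prop :=
  ∀ f : ℝ → ℝ, ContinuousOn f (Icc (0:ℝ) 1) → ConcaveOn ℝ (Icc (0:ℝ) 1) f →
    (∫ x, f (x : ℝ) ∂ν) / tmass ν ≤ (∫ x, f (x : ℝ) ∂μ) / tmass μ

/-- First order stochastic dominance `λ ⪯_F μ`. -/
def FLE (lam mu : Measure I) : Prop :=
  ∀ x : ℝ, lam {y : I | x ≤ (y : ℝ)} ≤ mu {y : I | x ≤ (y : ℝ)}

/-- A probability kernel with the martingale (barycenter) property. -/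
structure ProbKernel where
  k : I → Measure I
  meas : Measurable k
  prob : ∀ x, IsProbabilityMeasure (k x)
  bary_eq : ∀ x : I, ∫ y, (y : ℝ) ∂(k x) = (x : ℝ)

/-- Pushforward of a measure through a kernel. -/
def push (K : ProbKernel) (μ : Measure I) : Measure I := μ.bind K.k

/-- Blackwell order preserving kernels. -/
def BlackwellPreserving (K : ProbKernel) : Prop :=
  ∀ μ ν : Measure I, IsProbabilityMeasure μ → IsProbabilityMeasure ν →
    bary μ = bary ν → BLE μ ν → BLE (push K μ) (push K ν)

/-- FOSD kernel. -/
structure FOSDKernel where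
  k : I → Measure I
  meas : Measurable k
  prob : ∀ x, IsProbabilityMeasure (k x)
  up : ∀ x : I, k x {y : I | (x : ℝ) ≤ (y : ℝ)} = 1

/-- Domination order `λ ⪯_D μ`. -/
def DomLE (lam mu : Measure I) : Prop :=
  ∃ (φ : FOSDKernel) (ρ : ProbKernel), ((lam.bind φ.k).bind ρ.k) ≤ mu

/-- Interval measure for `μ` with threshold `l`. -/
def IsIntervalMeasure (l : ℝ) (μ ν : Measure I) : Prop :=
  ν ≤ μ ∧ bary ν = l ∧
    ∃ y₁ y₂ : ℝ, 0 ≤ y₁ ∧ y₁ ≤ y₂ ∧ y₂ ≤ 1 ∧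
      ν.restrict {x : I | y₁ < (x : ℝ) ∧ (x : ℝ) < y₂} =
        μ.restrict {x : I | y₁ < (x : ℝ) ∧ (x : ℝ) < y₂} ∧
      ν {x : I | (x : ℝ) < y₁ ∨ y₂ < (x : ℝ)} = 0

/-- Greedy measure predicate. -/
def IsGreedy (l : ℝ) (μ ν : Measure I) : Prop :=
  ν ≤ μ ∧ bary ν = l ∧
    ∃ y : ℝ, 0 ≤ y ∧ y ≤ 1 ∧
      ν.restrict {x : I | y < (x : ℝ)} = μ.restrict {x : I | y < (x : ℝ)} ∧
      ν {x : I | (x : ℝ) < y} = 0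

/-- The greedy measure (zero if none exists). -/
def greedy (l : ℝ) (μ : Measure I) : Measure I :=
  if h : ∃ ν, IsGreedy l μ ν then h.choose else 0

/-- Greedy mass. -/
def gmass (l : ℝ) (μ : Measure I) : ℝ := tmass (greedy l μ)

/-- Sequence of residual measures generated by a policy
(internal period `t : ℕ` corresponds to the paper's period `t+1`). -/
def policySeq (σk : ℕ → ProbKernel) (μ₁ : Measure I) (ν : ℕ → Measure I) : ℕ → Measure I
  | 0 => μ₁
  | t + 1 => push (σk t) (policySeq σk μ₁ ν t - ν t)

/-- Feasibility of a policy for horizon `T`. -/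
def Feasible (T : ℕ∞) (l : ℝ) (σk : ℕ → ProbKernel) (μ₁ : Measure I) (ν : ℕ → Measure I) : Prop :=
  (∀ t : ℕ, (t : ℕ∞) < T →
      ν t ≤ policySeq σk μ₁ ν t ∧ l * tmass (ν t) ≤ intg (ν t)) ∧
  (∀ t : ℕ, ¬ (t : ℕ∞) < T → ν t = 0)

/-- Value of a policy (the weight `w t` is the paper's `w_{t+1}`). -/
def value (T : ℕ∞) (w : ℕ → ℝ) (ν : ℕ → Measure I) : ℝ≥0∞ :=
  ∑' t : ℕ, if (t : ℕ∞) < T then ENNReal.ofReal (w t) * (ν t univ) else 0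

/-- The sender's value: supremum over feasible policies. -/
def senderValue (T : ℕ∞) (l : ℝ) (σk : ℕ → ProbKernel) (μ₁ : Measure I) (w : ℕ → ℝ) : ℝ≥0∞ :=
  ⨆ (ν : ℕ → Measure I) (_ : Feasible T l σk μ₁ ν), value T w ν

/-- Greedy state/action sequence with horizon `T`. -/
def gSeq (T : ℕ∞) (l : ℝ) (σk : ℕ → ProbKernel) (μ₁ : Measure I) : ℕ → Measure I × Measure I
  | 0 => (μ₁, if ((0 : ℕ) : ℕ∞) < T then greedy l μ₁ else 0)
  | t + 1 =>
      (push (σk t) ((gSeq T l σk μ₁ t).1 - (gSeq T l σk μ₁ t).2),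
        if ((t + 1 : ℕ) : ℕ∞) < T then
          greedy l (push (σk t) ((gSeq T l σk μ₁ t).1 - (gSeq T l σk μ₁ t).2)) else 0)

/-- The greedy policy. -/
def greedyPolicy (T : ℕ∞) (l : ℝ) (σk : ℕ → ProbKernel) (μ₁ : Measure I) (t : ℕ) : Measure I :=
  (gSeq T l σk μ₁ t).2

/-- Grids: `Z = ℤ ∩ [a,b]` is captured by order-connectedness. -/
structure Grid where
  Z : Set ℤ
  ordConn : Z.OrdConnected
  z : ℤ → I
  mono : ∀ i j, i ∈ Z → j ∈ Z → i < j → (z i : ℝ) < (z j : ℝ)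

/-- The random-walk kernel on a grid. -/
def IsRWKernel (G : Grid) (K : ProbKernel) : Prop :=
  ∀ j ∈ G.Z,
    ((j - 1 ∈ G.Z → j + 1 ∈ G.Z →
        K.k (G.z j) =
          ENNReal.ofReal (((G.z (j + 1) : ℝ) - (G.z j : ℝ)) /
              ((G.z (j + 1) : ℝ) - (G.z (j - 1) : ℝ))) • Measure.dirac (G.z (j - 1)) +
          ENNReal.ofReal (((G.z j : ℝ) - (G.z (j - 1) : ℝ)) /
              ((G.z (j + 1) : ℝ) - (G.z (j - 1) : ℝ))) • Measure.dirac (G.z (j + 1)))) ∧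
    ((j - 1 ∉ G.Z ∨ j + 1 ∉ G.Z) → K.k (G.z j) = Measure.dirac (G.z j))

/-- `D(Γ)` for threshold `l`. -/
def Dval (G : Grid) (l : ℝ) : ℝ :=
  sSup {d : ℝ | ∃ j : ℤ, j ≤ 0 ∧ j - 1 ∈ G.Z ∧
    d = (l - (G.z (j - 1) : ℝ)) / (l - (G.z j : ℝ))}

/-- Endpoint index of a grid. -/
def IsEndpointIdx (G : Grid) (j : ℤ) : Prop := j ∈ G.Z ∧ (j - 1 ∉ G.Z ∨ j + 1 ∉ G.Z)

/-- The measure is supported on the grid. -/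
def SuppOnGrid (G : Grid) (μ : Measure I) : Prop :=
  μ {x : I | ¬ ∃ j ∈ G.Z, x = G.z j} = 0

/-- `Δ*(Γ)`: supported on even- or on odd-indexed points (endpoints count as both). -/
def MemDeltaStar (G : Grid) (μ : Measure I) : Prop :=
  (μ {x : I | ¬ ∃ j ∈ G.Z, (Even j ∨ IsEndpointIdx G j) ∧ x = G.z j} = 0) ∨
  (μ {x : I | ¬ ∃ j ∈ G.Z, (Odd j ∨ IsEndpointIdx G j) ∧ x = G.z j} = 0)


lemma cont_integrable {F : I → ℝ} (hF : Continuous F) (m : Measure I) [IsFiniteMeasure m] :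
    Integrable F m := by
  obtain ⟨C, hC⟩ := (isCompact_univ : IsCompact (univ : Set I)).exists_bound_of_continuousOn
    hF.continuousOn
  exact ⟨hF.aestronglyMeasurable, HasFiniteIntegral.of_bounded
    (C := C) (ae_of_all _ fun y => hC y trivial)⟩

lemma push_univ (K : ProbKernel) (μ : Measure I) : (push K μ) univ = μ univ := by
  rw [push, Measure.bind_apply MeasurableSet.univ K.meas.aemeasurable]
  simp [(K.prob _).measure_univ]

instance push_finite (K : ProbKernel) (μ : Measure I) [IsFiniteMeasure μ] :
    IsFiniteMeasure (push K μ) :=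
  ⟨by rw [push_univ]; exact measure_lt_top μ univ⟩

lemma push_prob (K : ProbKernel) (μ : Measure I) [IsProbabilityMeasure μ] :
    IsProbabilityMeasure (push K μ) :=
  ⟨by rw [push_univ]; exact measure_univ⟩

lemma integral_push_nonneg (K : ProbKernel) (μ : Measure I) [IsFiniteMeasure μ]
    {F : I → ℝ} (hF : Continuous F) (hF0 : ∀ y, 0 ≤ F y) :
    ∫ y, F y ∂(push K μ) = ∫ x, ∫ y, F y ∂(K.k x) ∂μ := by
  obtain ⟨C, hC⟩ := (isCompact_univ : IsCompact (univ : Set I)).exists_bound_of_continuousOn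
    hF.continuousOn
  have hFm : Measurable F := hF.measurable
  set φ : I → ℝ := fun x => ∫ y, F y ∂(K.k x) with hφ
  have hφ_eq : ∀ x, φ x = (∫⁻ y, ENNReal.ofReal (F y) ∂(K.k x)).toReal := fun x =>
    integral_eq_lintegral_of_nonneg_ae (ae_of_all _ hF0) hF.aestronglyMeasurable
  have hφm : Measurable φ := by
    simp only [funext hφ_eq]
    exact (Measure.measurable_lintegral (hFm.ennreal_ofReal)).comp K.meas |>.ennreal_toReal
  have hφ0 : ∀ x, 0 ≤ φ x := fun x => integral_nonneg hF0
  have hφbd : ∀ x, ‖φ x‖ ≤ C := by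
    intro x
    have := K.prob x
    rw [Real.norm_eq_abs, abs_of_nonneg (hφ0 x)]
    calc φ x ≤ ∫ _, C ∂(K.k x) := by
          apply integral_mono (cont_integrable hF _) (integrable_const C)
          intro y; exact (le_abs_self _).trans ((Real.norm_eq_abs _ ▸ hC y trivial))
      _ = C := by simp
  have hφint : Integrable φ μ := ⟨hφm.aestronglyMeasurable,
    HasFiniteIntegral.of_bounded (C := C) (ae_of_all _ hφbd)⟩
  have inner : ∀ x, (∫⁻ y, ENNReal.ofReal (F y) ∂(K.k x)) = ENNReal.ofReal (φ x) := by
    intro x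
    have := K.prob x
    rw [← ofReal_integral_eq_lintegral_ofReal (cont_integrable hF _) (ae_of_all _ hF0)]
  calc ∫ y, F y ∂(push K μ)
      = (∫⁻ y, ENNReal.ofReal (F y) ∂(push K μ)).toReal :=
        integral_eq_lintegral_of_nonneg_ae (ae_of_all _ hF0) hF.aestronglyMeasurable
    _ = (∫⁻ x, ∫⁻ y, ENNReal.ofReal (F y) ∂(K.k x) ∂μ).toReal := by
        rw [push, Measure.lintegral_bind K.meas.aemeasurable hFm.ennreal_ofReal.aemeasurable]
    _ = (∫⁻ x, ENNReal.ofReal (φ x) ∂μ).toReal := by simp only [inner]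
    _ = (ENNReal.ofReal (∫ x, φ x ∂μ)).toReal := by
        rw [ofReal_integral_eq_lintegral_ofReal hφint (ae_of_all _ hφ0)]
    _ = ∫ x, φ x ∂μ := ENNReal.toReal_ofReal (integral_nonneg hφ0)

lemma integral_push (K : ProbKernel) (μ : Measure I) [IsFiniteMeasure μ]
    {F : I → ℝ} (hF : Continuous F) :
    ∫ y, F y ∂(push K μ) = ∫ x, ∫ y, F y ∂(K.k x) ∂μ := by
  obtain ⟨C, hC⟩ := (isCompact_univ : IsCompact (univ : Set I)).exists_bound_of_continuousOn
    hF.continuousOn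
  have hG : Continuous (fun y => F y + C) := hF.add continuous_const
  have hG0 : ∀ y, 0 ≤ F y + C := fun y => by
    have := hC y trivial; rw [Real.norm_eq_abs] at this
    have := abs_le.mp this; linarith [this.1]
  have key := integral_push_nonneg K μ hG hG0
  have hpf : IsFiniteMeasure (push K μ) := inferInstance
  have hl : ∫ y, F y + C ∂(push K μ)
      = (∫ y, F y ∂(push K μ)) + C * ((push K μ) univ).toReal := by
    rw [integral_add (cont_integrable hF _) (integrable_const C)]; simp [mul_comm, measureReal_def]
  have hφint : ∀ x, ∫ y, F y + C ∂(K.k x) = (∫ y, F y ∂(K.k x)) + C := by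
    intro x
    have := K.prob x
    rw [integral_add (cont_integrable hF _) (integrable_const C)]; simp
  rw [hl] at key
  simp only [hφint] at key
  have hφm : Measurable (fun x => ∫ y, F y ∂(K.k x)) := by
    have h1 : (fun x => ∫ y, F y ∂(K.k x))
        = fun x => (∫⁻ y, ENNReal.ofReal (F y + C) ∂(K.k x)).toReal - C := by
      funext x
      have := K.prob x
      rw [← integral_eq_lintegral_of_nonneg_ae (ae_of_all _ hG0) hG.aestronglyMeasurable,
        hφint x]
      ring
    rw [h1]
    exact ((Measure.measurable_lintegral (hG.measurable.ennreal_ofReal)).comp K.meas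
      |>.ennreal_toReal).sub measurable_const
  rw [integral_add ?_ (integrable_const C)] at key
  · simp only [integral_const, smul_eq_mul] at key
    rw [push_univ] at key
    have : C * (μ univ).toReal = (μ univ).toReal * C := mul_comm _ _
    rw [measureReal_def] at key
    linarith [key]
  · obtain ⟨C', hC'⟩ : ∃ C', ∀ x, ‖∫ y, F y ∂(K.k x)‖ ≤ C' := by
      refine ⟨C, fun x => ?_⟩
      have := K.prob x
      calc ‖∫ y, F y ∂(K.k x)‖ ≤ ∫ y, ‖F y‖ ∂(K.k x) := norm_integral_le_integral_norm _
        _ ≤ ∫ _, C ∂(K.k x) := integral_mono (cont_integrable hF.norm _)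
            (integrable_const C) (fun y => hC y trivial)
        _ = C := by simp
    exact ⟨hφm.aestronglyMeasurable, HasFiniteIntegral.of_bounded (C := C') (ae_of_all _ hC')⟩




-- concavity helpers

/-- chord below a concave function -/
lemma chord_le {f : ℝ → ℝ} (hconc : ConcaveOn ℝ (Icc (0:ℝ) 1) f)
    {u v w : ℝ} (h0 : 0 ≤ u) (h1 : w ≤ 1) (huv : u ≤ v) (hvw : v ≤ w) :
    (w - v) * f u + (v - u) * f w ≤ (w - u) * f v := by
  rcases eq_or_lt_of_le (huv.trans hvw) with h | huw
  · have hvu : v = u := le_antisymm (h ▸ hvw) huv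
    subst hvu; simp [← h]
  · have hwu : (0:ℝ) < w - u := by linarith
    have ha : 0 ≤ (w - v) / (w - u) := div_nonneg (by linarith) hwu.le
    have hb : 0 ≤ (v - u) / (w - u) := div_nonneg (by linarith) hwu.le
    have hab : (w - v) / (w - u) + (v - u) / (w - u) = 1 := by field_simp; ring
    have := hconc.2 ⟨h0, by linarith⟩ (⟨by linarith, h1⟩ : w ∈ Icc (0:ℝ) 1) ha hb hab
    have hx : ((w - v) / (w - u)) • u + ((v - u) / (w - u)) • w = v := by
      rw [smul_eq_mul, smul_eq_mul, div_mul_eq_mul_div, div_mul_eq_mul_div,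
        ← add_div, div_eq_iff hwu.ne']
      ring
    rw [hx] at this
    have h2 : ((w - v) / (w - u)) * f u + ((v - u) / (w - u)) * f w ≤ f v := this
    have := mul_le_mul_of_nonneg_left h2 hwu.le
    calc (w - v) * f u + (v - u) * f w
        = (w - u) * (((w - v) / (w - u)) * f u + ((v - u) / (w - u)) * f w) := by
          field_simp
      _ ≤ (w - u) * f v := this

/-- slope is antitone in both endpoints -/
lemma slope_anti {f : ℝ → ℝ} (hconc : ConcaveOn ℝ (Icc (0:ℝ) 1) f)
    {u v u' v' : ℝ} (hu : 0 ≤ u) (hv' : v' ≤ 1) (huu : u ≤ u') (hvv : v ≤ v')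
    (huv : u < v) (huv' : u' < v') :
    (f v' - f u') / (v' - u') ≤ (f v - f u) / (v - u) := by
  have huvmid : u < v' := lt_of_le_of_lt huu huv'
  have step1 : (f v' - f u') / (v' - u') ≤ (f v' - f u) / (v' - u) := by
    have hc := chord_le hconc hu hv' huu huv'.le
    rw [div_le_div_iff₀ (by linarith) (by linarith)]
    nlinarith [hc]
  have step2 : (f v' - f u) / (v' - u) ≤ (f v - f u) / (v - u) := by
    have hc := chord_le hconc hu hv' huv.le hvv
    rw [div_le_div_iff₀ (by linarith) (by linarith)]
    nlinarith [hc]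
  linarith

section Interp

variable (G : Grid) (K : ProbKernel) (f : ℝ → ℝ)

/-- grid coordinates -/
def xr (j : ℤ) : ℝ := (G.z j : ℝ)

/-- value of the averaged function at grid point `j` -/
def gval (j : ℤ) : ℝ := ∫ y, f (y : ℝ) ∂(K.k (G.z j))

/-- slope of the chord of `gval` between `j` and `j+1` -/
def sl (j : ℤ) : ℝ := (gval G K f (j + 1) - gval G K f j) / (xr G (j + 1) - xr G j)

/-- the chord line through `(xr j, gval j)` and `(xr (j+1), gval (j+1))` -/
def line (j : ℤ) (t : ℝ) : ℝ := gval G K f j + sl G K f j * (t - xr G j)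

/-- consecutive pair in the grid -/
def PP (j : ℤ) : Prop := j ∈ G.Z ∧ j + 1 ∈ G.Z

variable {G K f}

lemma xr_mem (j : ℤ) : xr G j ∈ Icc (0:ℝ) 1 := (G.z j).2

lemma xr_lt {i j : ℤ} (hi : i ∈ G.Z) (hj : j ∈ G.Z) (hij : i < j) : xr G i < xr G j :=
  G.mono i j hi hj hij

variable (hK : IsRWKernel G K)
include hK

lemma gval_endpoint {j : ℤ} (hj : j ∈ G.Z) (hep : j - 1 ∉ G.Z ∨ j + 1 ∉ G.Z) :
    gval G K f j = f (xr G j) := by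
  rw [gval, (hK j hj).2 hep, integral_dirac]
  rfl

lemma gval_interior {j : ℤ} (hm : j - 1 ∈ G.Z) (hj : j ∈ G.Z) (hp : j + 1 ∈ G.Z)
    (hf : ContinuousOn f (Icc (0:ℝ) 1)) :
    gval G K f j =
      ((xr G (j+1) - xr G j) / (xr G (j+1) - xr G (j-1))) * f (xr G (j-1)) +
      ((xr G j - xr G (j-1)) / (xr G (j+1) - xr G (j-1))) * f (xr G (j+1)) := by
  have hF : Continuous (fun y : I => f (y : ℝ)) :=
    hf.comp_continuous continuous_subtype_val (fun y => y.2)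
  have h1 : xr G (j-1) < xr G j := xr_lt hm hj (by omega)
  have h2 : xr G j < xr G (j+1) := xr_lt hj hp (by omega)
  have hp0 : 0 ≤ (xr G (j+1) - xr G j) / (xr G (j+1) - xr G (j-1)) :=
    div_nonneg (by linarith) (by linarith)
  have hq0 : 0 ≤ (xr G j - xr G (j-1)) / (xr G (j+1) - xr G (j-1)) :=
    div_nonneg (by linarith) (by linarith)
  simp only [xr] at h1 h2 hp0 hq0 ⊢
  have i1 : IsFiniteMeasure
      (ENNReal.ofReal (((G.z (j+1) : ℝ) - (G.z j : ℝ)) / ((G.z (j+1) : ℝ) - (G.z (j-1) : ℝ))) •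
        Measure.dirac (G.z (j-1))) := ⟨by simp [ENNReal.ofReal_lt_top]⟩
  have i2 : IsFiniteMeasure
      (ENNReal.ofReal (((G.z j : ℝ) - (G.z (j-1) : ℝ)) / ((G.z (j+1) : ℝ) - (G.z (j-1) : ℝ))) •
        Measure.dirac (G.z (j+1))) := ⟨by simp [ENNReal.ofReal_lt_top]⟩
  rw [gval, (hK j hj).1 hm hp,
    integral_add_measure (cont_integrable hF _) (cont_integrable hF _),
    integral_smul_measure, integral_smul_measure, integral_dirac, integral_dirac,
    ENNReal.toReal_ofReal hp0, ENNReal.toReal_ofReal hq0]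
  simp [smul_eq_mul]

variable (hf : ContinuousOn f (Icc (0:ℝ) 1)) (hconc : ConcaveOn ℝ (Icc (0:ℝ) 1) f)

include hf hconc in
lemma gval_le {j : ℤ} (hj : j ∈ G.Z) : gval G K f j ≤ f (xr G j) := by
  by_cases hep : j - 1 ∉ G.Z ∨ j + 1 ∉ G.Z
  · exact le_of_eq (gval_endpoint hK hj hep)
  · push_neg at hep
    obtain ⟨hm, hp⟩ := hep
    have h1 : xr G (j-1) < xr G j := xr_lt hm hj (by omega)
    have h2 : xr G j < xr G (j+1) := xr_lt hj hp (by omega)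
    rw [gval_interior hK hm hj hp hf]
    have hc := chord_le (f := f) hconc (xr_mem (G := G) (j-1)).1 (xr_mem (G := G) (j+1)).2
      h1.le h2.le
    rw [div_mul_eq_mul_div, div_mul_eq_mul_div, ← add_div, div_le_iff₀ (by linarith)]
    nlinarith [hc]

include hf in
lemma gval_ge {C : ℝ} (hC : ∀ t ∈ Icc (0:ℝ) 1, |f t| ≤ C) {j : ℤ} (hj : j ∈ G.Z) :
    -C ≤ gval G K f j := by
  by_cases hep : j - 1 ∉ G.Z ∨ j + 1 ∉ G.Z
  · rw [gval_endpoint hK hj hep]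
    linarith [abs_le.mp (hC _ (xr_mem (G := G) j))]
  · push_neg at hep
    obtain ⟨hm, hp⟩ := hep
    have h1 : xr G (j-1) < xr G j := xr_lt hm hj (by omega)
    have h2 : xr G j < xr G (j+1) := xr_lt hj hp (by omega)
    rw [gval_interior hK hm hj hp hf]
    have hp0 : 0 ≤ (xr G (j+1) - xr G j) / (xr G (j+1) - xr G (j-1)) :=
      div_nonneg (by linarith) (by linarith)
    have hq0 : 0 ≤ (xr G j - xr G (j-1)) / (xr G (j+1) - xr G (j-1)) :=
      div_nonneg (by linarith) (by linarith)
    have hpq : (xr G (j+1) - xr G j) / (xr G (j+1) - xr G (j-1)) +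
        (xr G j - xr G (j-1)) / (xr G (j+1) - xr G (j-1)) = 1 := by
      rw [← add_div, div_eq_one_iff_eq (by linarith)]; ring
    have b1 := abs_le.mp (hC _ (xr_mem (G := G) (j-1)))
    have b2 := abs_le.mp (hC _ (xr_mem (G := G) (j+1)))
    nlinarith [mul_le_mul_of_nonneg_left b1.1 hp0, mul_le_mul_of_nonneg_left b2.1 hq0]

omit hK in
/-- `gval (j+1) = gval j + sl j * Δ` -/
lemma gval_succ {j : ℤ} (hj : j ∈ G.Z) (hp : j + 1 ∈ G.Z) :
    gval G K f (j+1) = gval G K f j + sl G K f j * (xr G (j+1) - xr G j) := by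
  have h2 : xr G j < xr G (j+1) := xr_lt hj hp (by omega)
  rw [sl, div_mul_cancel₀ _ (by linarith : xr G (j+1) - xr G j ≠ 0)]
  ring

include hf hconc in
lemma sl_step {i : ℤ} (hi : PP G i) (hi1 : PP G (i+1)) : sl G K f (i+1) ≤ sl G K f i := by
  have hm : i + 1 - 1 ∈ G.Z := by simpa using hi.1
  have hp : i + 1 + 1 ∈ G.Z := hi1.2
  have eqi := gval_interior (f := f) hK hm hi1.1 hp hf
  rw [show i + 1 - 1 = i from by ring] at eqi
  set b := xr G i with hbdef
  set c := xr G (i+1) with hcdef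
  set d := xr G (i+1+1) with hddef
  have hbc : b < c := xr_lt hi.1 hi1.1 (by omega)
  have hcd : c < d := xr_lt hi1.1 hp (by omega)
  have hbd : b < d := hbc.trans hcd
  have hbdne : d - b ≠ 0 := sub_ne_zero.mpr hbd.ne'
  set T : ℝ := (f d - f b) / (d - b) with hT
  have key1 : gval G K f (i+1) - f b = (c - b) * T := by
    rw [eqi, hT]; field_simp; ring
  have key2 : f d - gval G K f (i+1) = (d - c) * T := by
    rw [eqi, hT]; field_simp; ring
  have hle1 : gval G K f i ≤ f b := gval_le hK hf hconc hi.1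
  have hle2 : gval G K f (i+1+1) ≤ f d := gval_le hK hf hconc hp
  have e1 : T ≤ sl G K f i := by
    rw [sl, ← hbdef, ← hcdef, le_div_iff₀ (by linarith)]
    nlinarith [key1]
  have e2 : sl G K f (i+1) ≤ T := by
    rw [sl, ← hcdef, ← hddef, div_le_iff₀ (by linarith)]
    nlinarith [key2]
  linarith

include hf hconc in
lemma sl_mono {i j : ℤ} (hi : PP G i) (hij : i ≤ j) (hj : PP G j) :
    sl G K f j ≤ sl G K f i := by
  have main : ∀ n, i ≤ n → (PP G n → sl G K f n ≤ sl G K f i) := by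
    refine Int.le_induction (fun _ => le_rfl) ?_
    intro n hn IH hPn1
    have hnZ : n ∈ G.Z := G.ordConn.out hi.1 hPn1.1 ⟨hn, by omega⟩
    have hPn : PP G n := ⟨hnZ, hPn1.1⟩
    exact (sl_step hK hf hconc hPn hPn1).trans (IH hPn)
  exact main j hij hj

include hf hconc in
lemma line_ge {i j : ℤ} (hi : PP G i) (hj : j ∈ G.Z) :
    gval G K f j ≤ line G K f i (xr G j) := by
  rcases le_or_gt j i with hji | hij
  · have main : ∀ n, n ≤ i → (n ∈ G.Z → gval G K f n ≤ line G K f i (xr G n)) := by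
      refine Int.le_induction_down (fun _ => by simp [line]) ?_
      intro n hn IH hmem
      have hnZ : n ∈ G.Z := G.ordConn.out hmem hi.1 ⟨by omega, hn⟩
      have hPn : PP G (n-1) := ⟨hmem, by rwa [sub_add_cancel]⟩
      have hsl : sl G K f i ≤ sl G K f (n-1) := sl_mono hK hf hconc hPn (by omega) hi
      have hgs : gval G K f n = gval G K f (n-1) +
          sl G K f (n-1) * (xr G n - xr G (n-1)) := by
        have := gval_succ (f := f) (G := G) (K := K) hPn.1 (by rwa [sub_add_cancel])
        rwa [sub_add_cancel] at this
      have hΔ : 0 < xr G n - xr G (n-1) :=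
        sub_pos.mpr (xr_lt hmem hnZ (by omega))
      have hIH := IH hnZ
      have hline : line G K f i (xr G (n-1)) = line G K f i (xr G n) -
          sl G K f i * (xr G n - xr G (n-1)) := by simp only [line]; ring
      nlinarith [mul_le_mul_of_nonneg_right hsl hΔ.le]
    exact main j hji hj
  · have main : ∀ n, i + 1 ≤ n → (n ∈ G.Z → gval G K f n ≤ line G K f i (xr G n)) := by
      refine Int.le_induction ?_ ?_
      · intro _
        have hgs := gval_succ (f := f) (G := G) (K := K) hi.1 hi.2
        simp only [line]
        exact le_of_eq hgs
      · intro n hn IH hmem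
        have hnZ : n ∈ G.Z := G.ordConn.out hi.1 hmem ⟨by omega, by omega⟩
        have hPn : PP G n := ⟨hnZ, hmem⟩
        have hsl : sl G K f n ≤ sl G K f i := sl_mono hK hf hconc hi (by omega) hPn
        have hgs := gval_succ (f := f) (G := G) (K := K) hnZ hmem
        have hΔ : 0 < xr G (n+1) - xr G n := sub_pos.mpr (xr_lt hnZ hmem (by omega))
        have hIH := IH hnZ
        have hline : line G K f i (xr G (n+1)) = line G K f i (xr G n) +
            sl G K f i * (xr G (n+1) - xr G n) := by simp only [line]; ring
        nlinarith [mul_le_mul_of_nonneg_right hsl hΔ.le]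
    exact main j hij hj

set_option maxHeartbeats 2000000 in
include hf hconc in
lemma line_lb {C : ℝ} (hC : ∀ t ∈ Icc (0:ℝ) 1, |f t| ≤ C) {i : ℤ} (hi : PP G i)
    {t : ℝ} (ht : t ∈ Icc (0:ℝ) 1) : -(3*C) ≤ line G K f i t := by
  have hb0 : (0:ℝ) ≤ xr G i := (xr_mem (G := G) i).1
  have hc1 : xr G (i+1) ≤ 1 := (xr_mem (G := G) (i+1)).2
  have hbc : xr G i < xr G (i+1) := xr_lt hi.1 hi.2 (by omega)
  have hc0 : (0:ℝ) < xr G (i+1) := lt_of_le_of_lt hb0 hbc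
  have hgi : -C ≤ gval G K f i := gval_ge hK hf hC hi.1
  have hgi1 : -C ≤ gval G K f (i+1) := gval_ge hK hf hC hi.2
  have hfb := abs_le.mp (hC _ (xr_mem (G := G) i))
  have hfc := abs_le.mp (hC _ (xr_mem (G := G) (i+1)))
  have hf0 := abs_le.mp (hC 0 ⟨le_rfl, zero_le_one⟩)
  have hf1 := abs_le.mp (hC 1 ⟨zero_le_one, le_rfl⟩)
  have l0 : line G K f i 0 = gval G K f i - sl G K f i * xr G i := by
    simp only [line]; ring
  have l1 : line G K f i 1 = gval G K f (i+1) + sl G K f i * (1 - xr G (i+1)) := by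
    have hgs := gval_succ (f := f) (G := G) (K := K) hi.1 hi.2
    simp only [line]
    rw [hgs]; ring
  have bound0 : -(3*C) ≤ line G K f i 0 := by
    rcases le_or_gt (sl G K f i) 0 with hsl | hsl
    · rw [l0]
      nlinarith [mul_nonpos_of_nonpos_of_nonneg hsl hb0]
    · -- upper bound on the slope
      have hub : ∃ a, 0 ≤ a ∧ a < xr G (i+1) ∧
          sl G K f i ≤ (f (xr G (i+1)) - f a) / (xr G (i+1) - a) := by
        by_cases him : i - 1 ∈ G.Z
        · refine ⟨xr G (i-1), (xr_mem (G := G) (i-1)).1, ?_, ?_⟩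
          · exact lt_trans (xr_lt him hi.1 (by omega)) hbc
          · have hab : xr G (i-1) < xr G i := xr_lt him hi.1 (by omega)
            have eqi := gval_interior (f := f) hK him hi.1 hi.2 hf
            have hne : xr G (i+1) - xr G (i-1) ≠ 0 := by
              have : xr G (i-1) < xr G (i+1) := lt_trans hab hbc
              exact sub_ne_zero.mpr this.ne'
            have key : (f (xr G (i+1)) - gval G K f i) * (xr G (i+1) - xr G (i-1)) =
                (xr G (i+1) - xr G i) * (f (xr G (i+1)) - f (xr G (i-1))) := by
              rw [eqi]; field_simp; ring
            have hle : gval G K f (i+1) ≤ f (xr G (i+1)) := gval_le hK hf hconc hi.2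
            rw [sl, div_le_div_iff₀ (by linarith) (by linarith)]
            nlinarith [key, mul_le_mul_of_nonneg_right (sub_le_sub_right hle (gval G K f i))
              (by linarith : (0:ℝ) ≤ xr G (i+1) - xr G (i-1))]
        · have heq : gval G K f i = f (xr G i) := gval_endpoint hK hi.1 (Or.inl him)
          refine ⟨xr G i, hb0, hbc, ?_⟩
          have hle : gval G K f (i+1) ≤ f (xr G (i+1)) := gval_le hK hf hconc hi.2
          rw [sl, heq]
          gcongr
      obtain ⟨a, ha0, hac, hsl_ub⟩ := hub
      have hslope : sl G K f i ≤ (f (xr G (i+1)) - f 0) / (xr G (i+1) - 0) := by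
        refine hsl_ub.trans (slope_anti hconc le_rfl hc1 ha0 le_rfl hc0 hac)
      have h1 : sl G K f i * xr G i ≤ sl G K f i * xr G (i+1) :=
        mul_le_mul_of_nonneg_left hbc.le hsl.le
      have h2 : sl G K f i * xr G (i+1) ≤
          ((f (xr G (i+1)) - f 0) / (xr G (i+1) - 0)) * xr G (i+1) :=
        mul_le_mul_of_nonneg_right hslope hc0.le
      have h3 : ((f (xr G (i+1)) - f 0) / (xr G (i+1) - 0)) * xr G (i+1)
          = f (xr G (i+1)) - f 0 := by
        rw [sub_zero, div_mul_cancel₀ _ hc0.ne']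
      rw [l0]
      nlinarith
  have bound1 : -(3*C) ≤ line G K f i 1 := by
    rcases le_or_gt 0 (sl G K f i) with hsl | hsl
    · rw [l1]
      nlinarith [mul_nonneg hsl (by linarith : (0:ℝ) ≤ 1 - xr G (i+1))]
    · have hlb : ∃ e, xr G (i+1) ≤ e ∧ e ≤ 1 ∧ xr G i < e ∧
          (f e - f (xr G i)) / (e - xr G i) ≤ sl G K f i := by
        by_cases hip : i + 1 + 1 ∈ G.Z
        · have hm : i + 1 - 1 ∈ G.Z := by simpa using hi.1
          have eqi := gval_interior (f := f) hK hm hi.2 hip hf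
          rw [show i + 1 - 1 = i from by ring] at eqi
          have hcd : xr G (i+1) < xr G (i+1+1) := xr_lt hi.2 hip (by omega)
          refine ⟨xr G (i+1+1), hcd.le, (xr_mem (G := G) (i+1+1)).2, hbc.trans hcd, ?_⟩
          have hne : xr G (i+1+1) - xr G i ≠ 0 := by
            have : xr G i < xr G (i+1+1) := hbc.trans hcd
            exact sub_ne_zero.mpr this.ne'
          have key : (gval G K f (i+1) - f (xr G i)) * (xr G (i+1+1) - xr G i) =
              (xr G (i+1) - xr G i) * (f (xr G (i+1+1)) - f (xr G i)) := by
            rw [eqi]; field_simp; ring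
          have hle : gval G K f i ≤ f (xr G i) := gval_le hK hf hconc hi.1
          rw [sl, div_le_div_iff₀ (by linarith) (by linarith)]
          nlinarith [key, mul_le_mul_of_nonneg_right (sub_le_sub_left hle (gval G K f (i+1)))
            (by linarith : (0:ℝ) ≤ xr G (i+1+1) - xr G i)]
        · have heq : gval G K f (i+1) = f (xr G (i+1)) :=
            gval_endpoint hK hi.2 (Or.inr hip)
          refine ⟨xr G (i+1), le_rfl, hc1, hbc, ?_⟩
          have hle : gval G K f i ≤ f (xr G i) := gval_le hK hf hconc hi.1
          rw [sl, heq]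
          gcongr
      obtain ⟨e, hce, he1, hbe, hsl_lb⟩ := hlb
      rcases eq_or_lt_of_le hc1 with hceq | hclt
      · rw [l1, hceq]
        simp
        linarith
      · have hslope : (f 1 - f (xr G (i+1))) / (1 - xr G (i+1)) ≤ sl G K f i := by
          refine le_trans (slope_anti hconc hb0 le_rfl hbc.le he1 hbe hclt) hsl_lb
        have h2 : ((f 1 - f (xr G (i+1))) / (1 - xr G (i+1))) * (1 - xr G (i+1)) ≤
            sl G K f i * (1 - xr G (i+1)) :=
          mul_le_mul_of_nonneg_right hslope (by linarith)
        rw [div_mul_cancel₀ _ (by linarith : (1:ℝ) - xr G (i+1) ≠ 0)] at h2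
        rw [l1]
        nlinarith
  have laffine : line G K f i t = (1-t) * line G K f i 0 + t * line G K f i 1 := by
    simp only [line]; ring
  rw [laffine]
  nlinarith [mul_le_mul_of_nonneg_left bound0 (by linarith [ht.2] : (0:ℝ) ≤ 1 - t),
    mul_le_mul_of_nonneg_left bound1 ht.1]

omit hK in
lemma line_right {j : ℤ} (hj : j ∈ G.Z) (hp : j + 1 ∈ G.Z) :
    line G K f j (xr G (j+1)) = gval G K f (j+1) := by
  have := gval_succ (f := f) (G := G) (K := K) hj hp
  simp only [line]
  linarith

omit hK in
lemma pair_mem {i₀ j : ℤ} (hi₀ : PP G i₀) (hj : j ∈ G.Z) : PP G j ∨ PP G (j-1) := by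
  by_cases hp : j + 1 ∈ G.Z
  · exact Or.inl ⟨hj, hp⟩
  · rcases lt_trichotomy j i₀ with hlt | heq | hgt
    · exact absurd (G.ordConn.out hj hi₀.1 ⟨by omega, by omega⟩) hp
    · subst heq; exact absurd hi₀.2 hp
    · have hm : j - 1 ∈ G.Z := G.ordConn.out hi₀.1 hj ⟨by omega, by omega⟩
      exact Or.inr ⟨hm, by rwa [sub_add_cancel]⟩

set_option maxHeartbeats 4000000 in
include hK hf hconc in
lemma exists_concave_interp :
    ∃ h : ℝ → ℝ, ContinuousOn h (Icc (0:ℝ) 1) ∧ ConcaveOn ℝ (Icc (0:ℝ) 1) h ∧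
      ∀ j ∈ G.Z, h (xr G j) = gval G K f j := by
  by_cases hex : ∃ i, PP G i
  case neg =>
    refine ⟨f, hf, hconc, fun j hj => ?_⟩
    have hep : j + 1 ∉ G.Z := fun hp => hex ⟨j, hj, hp⟩
    exact (gval_endpoint hK hj (Or.inr hep)).symm
  case pos =>
    obtain ⟨i₀, hi₀⟩ := hex
    obtain ⟨C, hC'⟩ := isCompact_Icc.exists_bound_of_continuousOn hf
    have hC : ∀ t ∈ Icc (0:ℝ) 1, |f t| ≤ C := fun t ht => by
      simpa [Real.norm_eq_abs] using hC' t ht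
    haveI : Nonempty {i // PP G i} := ⟨⟨i₀, hi₀⟩⟩
    set h : ℝ → ℝ := fun t => ⨅ i : {i // PP G i}, line G K f (i : ℤ) t with hh
    have hbdd : ∀ t ∈ Icc (0:ℝ) 1,
        BddBelow (range fun i : {i // PP G i} => line G K f (i:ℤ) t) := by
      intro t ht
      refine ⟨-(3*C), ?_⟩
      rintro y ⟨i, rfl⟩
      exact line_lb hK hf hconc hC i.2 ht
    have hmle : ∀ u ∈ Icc (0:ℝ) 1, -(3*C) ≤ h u := fun u hu =>
      le_ciInf fun i => line_lb hK hf hconc hC i.2 hu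
    have hmatch : ∀ j ∈ G.Z, h (xr G j) = gval G K f j := by
      intro j hj
      apply le_antisymm
      · rcases pair_mem (G := G) hi₀ hj with hPj | hPj
        · calc h (xr G j) ≤ line G K f j (xr G j) :=
              ciInf_le (hbdd _ (xr_mem (G:=G) j)) ⟨j, hPj⟩
            _ = gval G K f j := by simp [line]
        · have hlr := line_right (f := f) (G := G) (K := K) hPj.1 hPj.2
          rw [sub_add_cancel] at hlr
          calc h (xr G j) ≤ line G K f (j-1) (xr G j) :=
              ciInf_le (hbdd _ (xr_mem (G:=G) j)) ⟨j-1, hPj⟩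
            _ = gval G K f j := hlr
      · exact le_ciInf fun i => line_ge hK hf hconc i.2 hj
    have hconc_h : ConcaveOn ℝ (Icc (0:ℝ) 1) h := by
      refine ⟨convex_Icc 0 1, fun x hx y hy a b ha hb hab => ?_⟩
      have hxle : ∀ i : {i // PP G i}, h x ≤ line G K f (i:ℤ) x := fun i =>
        ciInf_le (hbdd x hx) i
      have hyle : ∀ i : {i // PP G i}, h y ≤ line G K f (i:ℤ) y := fun i =>
        ciInf_le (hbdd y hy) i
      show a • h x + b • h y ≤ ⨅ i : {i // PP G i}, line G K f (i:ℤ) (a • x + b • y)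
      refine le_ciInf fun i => ?_
      have lin : line G K f (i:ℤ) (a • x + b • y)
          = a * line G K f (i:ℤ) x + b * line G K f (i:ℤ) y := by
        simp only [line, smul_eq_mul]
        have hb1 : b = 1 - a := by linarith
        rw [hb1]; ring
      rw [lin, smul_eq_mul, smul_eq_mul]
      have h1 := mul_le_mul_of_nonneg_left (hxle i) ha
      have h2 := mul_le_mul_of_nonneg_left (hyle i) hb
      linarith
    have hcont : ContinuousOn h (Icc (0:ℝ) 1) := by
      intro t ht
      rw [Metric.continuousWithinAt_iff]
      intro ε hε
      have hht : -(3*C) ≤ h t := hmle t ht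
      set m : ℝ := -(3*C) with hmdef
      set M : ℝ := |h t| + |m| + 1 with hMdef
      have hM0 : (0:ℝ) < M := by positivity
      have hbound : h t - m ≤ M := by
        have := le_abs_self (h t)
        have := le_abs_self (-m)
        have : -m ≤ |m| := by rw [abs_neg] at this; exact this
        calc h t - m ≤ |h t| + |m| := by
              have := le_abs_self (h t)
              have h2 : -m ≤ |m| := neg_le_abs m
              linarith
          _ ≤ M := by rw [hMdef]; linarith
      obtain ⟨i₁, hi₁⟩ : ∃ i : {i // PP G i}, line G K f (i:ℤ) t < h t + ε/2 :=
        exists_lt_of_ciInf_lt (by linarith : h t < h t + ε/2)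
      set s₁ : ℝ := |sl G K f (i₁ : ℤ)| + 1 with hs₁def
      have hs₁ : (0:ℝ) < s₁ := by positivity
      set δ₁ : ℝ := (ε/2) / s₁ with hδ₁def
      have hδ₁ : 0 < δ₁ := by positivity
      set δ₂ : ℝ := if t < 1 then (1 - t) * ε / (2 * M) else 1 with hδ₂def
      have hδ₂ : 0 < δ₂ := by
        rw [hδ₂def]; split_ifs with h2
        · have : 0 < 1 - t := by linarith
          positivity
        · exact one_pos
      set δ₃ : ℝ := if 0 < t then t * ε / (2 * M) else 1 with hδ₃def
      have hδ₃ : 0 < δ₃ := by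
        rw [hδ₃def]; split_ifs with h3
        · positivity
        · exact one_pos
      refine ⟨min δ₁ (min δ₂ δ₃), by positivity, ?_⟩
      intro x hx hdist
      rw [Real.dist_eq] at hdist
      have hxt1 : |x - t| < δ₁ := lt_of_lt_of_le hdist (min_le_left _ _)
      have hup : h x < h t + ε := by
        have h1 : h x ≤ line G K f (i₁:ℤ) x := ciInf_le (hbdd x hx) i₁
        have h2 : line G K f (i₁:ℤ) x = line G K f (i₁:ℤ) t
            + sl G K f (i₁:ℤ) * (x - t) := by simp only [line]; ring
        have h3 : sl G K f (i₁:ℤ) * (x - t) ≤ s₁ * |x - t| := by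
          calc sl G K f (i₁:ℤ) * (x - t) ≤ |sl G K f (i₁:ℤ) * (x - t)| := le_abs_self _
            _ = |sl G K f (i₁:ℤ)| * |x - t| := abs_mul _ _
            _ ≤ s₁ * |x - t| := by
                apply mul_le_mul_of_nonneg_right _ (abs_nonneg _)
                rw [hs₁def]; linarith
        have h4 : s₁ * |x - t| < s₁ * δ₁ := by
          exact mul_lt_mul_of_pos_left hxt1 hs₁
        have h5 : s₁ * δ₁ = ε/2 := by
          rw [hδ₁def, mul_div_cancel₀ _ hs₁.ne']
        have h7 : sl G K f (↑i₁ : ℤ) * (x - t) < ε/2 :=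
          lt_of_le_of_lt h3 (lt_of_lt_of_le h4 (le_of_eq h5))
        have h8 : h x ≤ line G K f (↑i₁ : ℤ) t + sl G K f (↑i₁ : ℤ) * (x - t) :=
          h1.trans_eq h2
        linarith [hi₁, h7, h8]
      have hdown : h t - ε < h x := by
        rcases lt_trichotomy x t with hlt | heq | hgt
        · have ht0 : 0 < t := lt_of_le_of_lt hx.1 hlt
          have hδ₃eq : δ₃ = t * ε / (2 * M) := if_pos ht0
          have hxt : t - x < δ₃ := by
            have h6 := lt_of_lt_of_le hdist ((min_le_right _ _).trans (min_le_right _ _))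
            rw [abs_of_neg (by linarith : x - t < 0)] at h6
            linarith
          set a : ℝ := (t - x) / t with hadef
          have ha0 : 0 ≤ a := div_nonneg (by linarith) ht0.le
          have hb0' : 0 ≤ x / t := div_nonneg hx.1 ht0.le
          have hne0 : t ≠ 0 := ht0.ne'
          have habt : a + x / t = 1 := by
            rw [hadef]; field_simp; ring
          have h0mem : (0:ℝ) ∈ Icc (0:ℝ) 1 := ⟨le_rfl, zero_le_one⟩
          have hcomb := hconc_h.2 h0mem ht ha0 hb0' habt
          have hpt : a • (0:ℝ) + (x / t) • t = x := by
            rw [smul_eq_mul, smul_eq_mul, mul_zero, div_mul_cancel₀ _ hne0, zero_add]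
          rw [hpt, smul_eq_mul, smul_eq_mul] at hcomb
          have hh0 : m ≤ h 0 := hmle 0 h0mem
          have ha_lt : a * M < ε / 2 := by
            have h7 : a < ε / (2 * M) := by
              rw [hadef, div_lt_iff₀ ht0]
              have : t * ε / (2 * M) = ε / (2 * M) * t := by ring
              linarith [hxt.trans_eq (hδ₃eq.trans this) ]
            calc a * M < (ε / (2*M)) * M := mul_lt_mul_of_pos_right h7 hM0
              _ = ε/2 := by field_simp
          have hxb : x / t = 1 - a := by linarith
          rw [hxb] at hcomb
          have h8 : a * m ≤ a * h 0 := mul_le_mul_of_nonneg_left hh0 ha0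
          have h9 : a * (h t - m) ≤ a * M := mul_le_mul_of_nonneg_left hbound ha0
          nlinarith
        · rw [heq]; linarith
        · have ht1 : t < 1 := lt_of_lt_of_le hgt hx.2
          have hδ₂eq : δ₂ = (1 - t) * ε / (2 * M) := if_pos ht1
          have hxt : x - t < δ₂ := by
            have h6 := lt_of_lt_of_le hdist ((min_le_right _ _).trans (min_le_left _ _))
            rw [abs_of_pos (by linarith : 0 < x - t)] at h6
            linarith
          set a : ℝ := (x - t) / (1 - t) with hadef
          have ha0 : 0 ≤ a := div_nonneg (by linarith) (by linarith)
          have hb0' : 0 ≤ (1 - x) / (1 - t) := div_nonneg (by linarith [hx.2]) (by linarith)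
          have habt : (1 - x) / (1 - t) + a = 1 := by
            rw [hadef, ← add_div, div_eq_one_iff_eq (by linarith)]; ring
          have h1mem : (1:ℝ) ∈ Icc (0:ℝ) 1 := ⟨zero_le_one, le_rfl⟩
          have hcomb := hconc_h.2 ht h1mem hb0' ha0 habt
          have hne1 : (1:ℝ) - t ≠ 0 := by intro hz; rw [sub_eq_zero] at hz; exact ht1.ne hz.symm
          have hpt : ((1 - x) / (1 - t)) • t + a • (1:ℝ) = x := by
            rw [smul_eq_mul, smul_eq_mul, mul_one, hadef, div_mul_eq_mul_div,
              ← add_div, div_eq_iff hne1]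
            ring
          rw [hpt, smul_eq_mul, smul_eq_mul] at hcomb
          have hh1 : m ≤ h 1 := hmle 1 h1mem
          have ha_lt : a * M < ε / 2 := by
            have h7 : a < ε / (2 * M) := by
              rw [hadef, div_lt_iff₀ (by linarith : (0:ℝ) < 1 - t)]
              have : (1 - t) * ε / (2 * M) = ε / (2 * M) * (1 - t) := by ring
              linarith [hxt.trans_eq (hδ₂eq.trans this)]
            calc a * M < (ε / (2*M)) * M := mul_lt_mul_of_pos_right h7 hM0
              _ = ε/2 := by field_simp
          have hxb : (1 - x) / (1 - t) = 1 - a := by linarith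
          rw [hxb] at hcomb
          have h8 : a * m ≤ a * h 1 := mul_le_mul_of_nonneg_left hh1 ha0
          have h9 : a * (h t - m) ≤ a * M := mul_le_mul_of_nonneg_left hbound ha0
          nlinarith
      rw [Real.dist_eq, abs_lt]
      constructor <;> linarith
    exact ⟨h, hcont, hconc_h, hmatch⟩

end Interp

/-- the random-walk kernel on a grid is Blackwell order preserving
on probability measures supported on the grid. -/
theorem rw_kernel_blackwell_preserving
    (G : Grid) (K : ProbKernel) (hK : IsRWKernel G K)
    (μ ν : Measure I) (hμ : IsProbabilityMeasure μ) (hν : IsProbabilityMeasure ν)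
    (hμs : SuppOnGrid G μ) (hνs : SuppOnGrid G ν)
    (hbar : bary μ = bary ν) (h : BLE μ ν) :
    BLE (push K μ) (push K ν) := by
  intro f hf hconc
  haveI := hμ
  haveI := hν
  haveI hpμ : IsProbabilityMeasure (push K μ) := push_prob K μ
  haveI hpν : IsProbabilityMeasure (push K ν) := push_prob K ν
  obtain ⟨h', hcont, hconc', hmatch⟩ := exists_concave_interp (G := G) (K := K) hK hf hconc
  have hFc : Continuous (fun y : I => f (y:ℝ)) :=
    hf.comp_continuous continuous_subtype_val (fun y => y.2)
  have key : ∀ (ρ : Measure I), IsProbabilityMeasure ρ → SuppOnGrid G ρ →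
      ∫ y : I, f (y:ℝ) ∂(push K ρ) = ∫ x : I, h' (x:ℝ) ∂ρ := by
    intro ρ hρ hρs
    haveI := hρ
    rw [integral_push K ρ hFc]
    apply integral_congr_ae
    have hae : ∀ᵐ x ∂ρ, ∃ j ∈ G.Z, x = G.z j := by
      rw [ae_iff]
      exact hρs
    filter_upwards [hae] with x hx
    obtain ⟨j, hj, rfl⟩ := hx
    exact (hmatch j hj).symm
  have h1 : tmass (push K μ) = 1 := by simp [tmass, measure_univ]
  have h2 : tmass (push K ν) = 1 := by simp [tmass, measure_univ]
  have h3 : tmass μ = 1 := by simp [tmass, measure_univ]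
  have h4 : tmass ν = 1 := by simp [tmass, measure_univ]
  have hb := h h' hcont hconc'
  rw [h3, h4, div_one, div_one] at hb
  rw [h1, h2, div_one, div_one, key μ hμ hμs, key ν hν hνs]
  exact hb

end Persuasion
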